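/- Let π be a permutation of ({0,1}ⁿ)ʷ, let 0 < α < 1 with q = 2^{αn} a power of two, and let ε₁, ε₂, ε₃ > 0. Suppose that for every pair of discrete q-boxes U, V of dimension w one has |{x ∈ U : π(x) ∈ V}| < 2^{αnw(1 − ε₁ − ε₂ − ε₃ − 1/(αn))}, i.e. condd_α(π) < w(1 − ε₁ − ε₂ − ε₃ − 1/(αn)). Then π is an (α, ε₁, r)-Multi-Source-Somewhere-Condenser with r = w·2^{−αnε₂} + 2^{−αnwε₃}. -/

import Mathlib

/-!
Let `Z` be the law of `π(X₁, …, X_w)` and call a value `v` heavy for coordinate `i` when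
`P[Zᵢ = v] > 2^{-(1+ε₁+ε₂)αn}`, so that each coordinate has at most `2^{(1+ε₁+ε₂)αn}` heavy values.
Splitting `Z` according to the first coordinate `i` whose value is light gives pieces whose `i`-th
coordinate has min-entropy at least `(1+ε₁)αn` as soon as the piece has mass at least `2^{-αnε₂}`;
the lighter pieces weigh at most `w·2^{-αnε₂}` in total. The remaining mass sits on the box of
heavy values. The probability that `π(X)` lands there is linear in each `Xᵢ`, and a linear
functional on the distributions bounded by `1/q` is maximised by a uniform distribution on `q`
points, so it is at most `q^{-w}` times the number of points of some `q`-box that `π` maps into the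
heavy box. Covering each heavy set by `2·2^{(ε₁+ε₂)αn}` sets of size `q` and applying the
conductance bound to each of the resulting pairs of `q`-boxes bounds this by `2^{-αnwε₃}`.
-/

open Finset

namespace Stmt1

/-- Bit strings of length `n`, i.e. `{0,1}ⁿ`. -/
abbrev Str (n : ℕ) := Fin n → Bool

/-- The space `({0,1}ⁿ)ʷ`. -/
abbrev Space (n w : ℕ) := Fin w → Str n

/-- A family `Us` of subsets of `{0,1}ⁿ` describes a discrete `q`-box of dimension `w`
(the box itself being the product set `Fintype.piFinset Us`). -/
def IsBox (n w q : ℕ) (Us : Fin w → Finset (Str n)) : Prop :=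
  ∀ i, (Us i).card = q

/-- `|{x ∈ U : π(x) ∈ V}|` for the boxes `U = U₁ × ⋯ × U_w` and `V = V₁ × ⋯ × V_w`. -/
def boxCount {n w : ℕ} (π : Space n w → Space n w)
    (Us Vs : Fin w → Finset (Str n)) : ℕ :=
  ((Fintype.piFinset Us).filter (fun x => π x ∈ Fintype.piFinset Vs)).card

/-- `p` is a probability distribution on a finite type. -/
def IsDist {α : Type*} [Fintype α] (p : α → ℝ) : Prop :=
  (∀ x, 0 ≤ p x) ∧ ∑ x, p x = 1

/-- The distribution of `π(X)` when `X` has distribution `p`. -/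
def pushforward {n w : ℕ} (π : Space n w → Space n w) (p : Space n w → ℝ) :
    Space n w → ℝ :=
  fun y => ∑ x : Space n w, if π x = y then p x else 0

/-- `π` is an `(α, ε₁, ε₂)`-Multi-Source-Somewhere-Condenser: for all independent sources
`X₁, …, X_w` on `{0,1}ⁿ`, each of min-entropy at least `αn`, the distribution of
`π(X₁, …, X_w)` is a convex combination `∑ᵢ γᵢ Cᵢ + γ R` with `γ ≤ ε₂` and the `i`-th
coordinate of `Cᵢ` having min-entropy at least `(1+ε₁)αn` (whenever `γᵢ > 0`). -/
def IsMSSC (n w : ℕ) (π : Space n w → Space n w) (α ε₁ ε₂ : ℝ) : Prop :=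
  ∀ X : Fin w → (Str n → ℝ),
    (∀ i, IsDist (X i)) →
    (∀ i x, X i x ≤ (2 : ℝ) ^ (-(α * n))) →
    ∃ (γ : Fin w → ℝ) (γR : ℝ) (C : Fin w → (Space n w → ℝ)) (R : Space n w → ℝ),
      (∀ i, 0 ≤ γ i) ∧ 0 ≤ γR ∧ (∑ i, γ i) + γR = 1 ∧ γR ≤ ε₂ ∧
      (∀ i, IsDist (C i)) ∧ IsDist R ∧
      (∀ y, pushforward π (fun x => ∏ i, X i (x i)) y
          = (∑ i, γ i * C i y) + γR * R y) ∧
      (∀ i, 0 < γ i → ∀ v : Str n,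
        (∑ y : Space n w, if y i = v then C i y else 0) ≤ (2 : ℝ) ^ (-((1 + ε₁) * α * n)))

section Uniform

variable {α : Type*} [DecidableEq α]

noncomputable def uniformOn (T : Finset α) (v : α) : ℝ := if v ∈ T then (#T : ℝ)⁻¹ else 0

lemma uniformOn_eq (T : Finset α) (v : α) :
    uniformOn T v = (#T : ℝ)⁻¹ * if v ∈ T then 1 else 0 := by
  unfold uniformOn; split_ifs <;> simp

variable [Fintype α]

lemma sum_uniformOn_mul (T : Finset α) (g : α → ℝ) :
    ∑ v, uniformOn T v * g v = (#T : ℝ)⁻¹ * ∑ v ∈ T, g v := by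
  simp only [uniformOn_eq, mul_assoc, ← mul_sum, ite_mul, one_mul, zero_mul, sum_ite_mem,
    univ_inter]

lemma isDist_uniformOn {T : Finset α} (hT : T.Nonempty) : IsDist (uniformOn T) := by
  refine ⟨fun v => by unfold uniformOn; split_ifs <;> positivity, ?_⟩
  simpa [hT.card_pos.ne'] using sum_uniformOn_mul T 1

lemma exists_card_eq_threshold (g : α → ℝ) {q : ℕ} (hq : 0 < q) (hqα : q ≤ Fintype.card α) :
    ∃ T : Finset α, #T = q ∧ ∃ c, (∀ v ∈ T, c ≤ g v) ∧ ∀ v ∉ T, g v ≤ c := by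
  obtain ⟨T, hT, hmax⟩ := (univ.powersetCard q).exists_max_image (fun T => ∑ v ∈ T, g v)
    (powersetCard_nonempty.2 (by simpa using hqα))
  rw [mem_powersetCard] at hT
  obtain ⟨a, ha, hmin⟩ := T.exists_min_image g (card_pos.1 (hT.2 ▸ hq))
  refine ⟨T, hT.2, g a, hmin, fun v hv => ?_⟩
  by_contra! hlt
  have hv' : v ∉ T.erase a := fun h => hv (mem_of_mem_erase h)
  have hswap := hmax (insert v (T.erase a)) <| mem_powersetCard.2
    ⟨subset_univ _, by rw [card_insert_of_notMem hv', card_erase_of_mem ha, hT.2]; omega⟩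
  rw [sum_insert hv'] at hswap
  linarith [add_sum_erase T g ha]

lemma exists_card_eq_sum_mul_le {q : ℕ} (hq : 0 < q) (hqα : q ≤ Fintype.card α) {X : α → ℝ}
    (hX : IsDist X) (hXq : ∀ v, X v ≤ (q : ℝ)⁻¹) (g : α → ℝ) :
    ∃ T : Finset α, #T = q ∧ ∑ v, X v * g v ≤ ∑ v, uniformOn T v * g v := by
  obtain ⟨T, hTq, c, hle, hge⟩ := exists_card_eq_threshold g hq hqα
  refine ⟨T, hTq, ?_⟩
  have hU : IsDist (uniformOn T) := isDist_uniformOn (card_pos.1 (hTq ▸ hq))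
  -- on `T` the first factor is `≤ 0` and the second `≥ 0`, off `T` the other way round
  have hterm : ∀ v, (X v - uniformOn T v) * (g v - c) ≤ 0 := by
    intro v
    by_cases hv : v ∈ T
    · rw [uniformOn, if_pos hv, hTq]
      exact mul_nonpos_of_nonpos_of_nonneg (by linarith [hXq v]) (by linarith [hle v hv])
    · rw [uniformOn, if_neg hv, sub_zero]
      exact mul_nonpos_of_nonneg_of_nonpos (hX.1 v) (by linarith [hge v hv])
  have hexpand : ∑ v, (X v - uniformOn T v) * (g v - c)
      = ∑ v, X v * g v - ∑ v, uniformOn T v * g v - (∑ v, X v - ∑ v, uniformOn T v) * c := by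
    simp only [sub_mul, mul_sub, sum_sub_distrib, sum_mul]
  rw [hX.2, hU.2, sub_self, zero_mul, sub_zero] at hexpand
  linarith [sum_nonpos fun v (_ : v ∈ univ) => hterm v]

end Uniform

section ProductExpectation

variable {ι α : Type*} [Fintype ι] [DecidableEq ι] [Fintype α] [DecidableEq α]

def prodExpect (c : ι → α → ℝ) (S : (ι → α) → ℝ) : ℝ := ∑ x, (∏ i, c i (x i)) * S x

def slice (c : ι → α → ℝ) (S : (ι → α) → ℝ) (j : ι) (v : α) : ℝ :=
  ∑ x, if x j = v then (∏ i ∈ univ.erase j, c i (x i)) * S x else 0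

lemma prodExpect_update (c : ι → α → ℝ) (S : (ι → α) → ℝ) (j : ι) (d : α → ℝ) :
    prodExpect (Function.update c j d) S = ∑ v, d v * slice c S j v := by
  have hprod : ∀ x : ι → α,
      ∏ i, Function.update c j d i (x i) = d (x j) * ∏ i ∈ univ.erase j, c i (x i) := by
    intro x
    rw [← mul_prod_erase univ _ (mem_univ j), Function.update_self]
    congr 1
    exact prod_congr rfl fun i hi => by rw [Function.update_of_ne (ne_of_mem_erase hi)]
  simp only [prodExpect, slice, hprod, mul_sum, mul_ite, mul_zero]
  rw [sum_comm]
  refine sum_congr rfl fun x _ => ?_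
  rw [sum_ite_eq, if_pos (mem_univ _), mul_assoc]

lemma prodExpect_eq_sum_mul_slice (c : ι → α → ℝ) (S : (ι → α) → ℝ) (j : ι) :
    prodExpect c S = ∑ v, c j v * slice c S j v := by
  rw [← prodExpect_update, Function.update_eq_self]

lemma exists_prodExpect_le_update_uniformOn {q : ℕ} (hq : 0 < q) (hqα : q ≤ Fintype.card α)
    (c : ι → α → ℝ) (S : (ι → α) → ℝ) (j : ι) (hc : IsDist (c j))
    (hcq : ∀ v, c j v ≤ (q : ℝ)⁻¹) :
    ∃ T : Finset α, #T = q ∧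
      prodExpect c S ≤ prodExpect (Function.update c j (uniformOn T)) S := by
  obtain ⟨T, hT, hle⟩ := exists_card_eq_sum_mul_le hq hqα hc hcq (slice c S j)
  exact ⟨T, hT, by rwa [prodExpect_eq_sum_mul_slice c S j, prodExpect_update]⟩

lemma exists_prodExpect_le_uniformOn {q : ℕ} (hq : 0 < q) (hqα : q ≤ Fintype.card α)
    {X : ι → α → ℝ} (hX : ∀ i, IsDist (X i)) (hXq : ∀ i v, X i v ≤ (q : ℝ)⁻¹)
    (S : (ι → α) → ℝ) :
    ∃ U : ι → Finset α, (∀ i, #(U i) = q) ∧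
      prodExpect X S ≤ prodExpect (fun i => uniformOn (U i)) S := by
  -- induction on the set `s` of coordinates not yet replaced by uniform distributions
  suffices key : ∀ s : Finset ι, ∀ c : ι → α → ℝ,
      (∀ i ∈ s, IsDist (c i) ∧ ∀ v, c i v ≤ (q : ℝ)⁻¹) →
      (∀ i ∉ s, ∃ T : Finset α, #T = q ∧ c i = uniformOn T) →
      ∃ U : ι → Finset α, (∀ i, #(U i) = q) ∧
        prodExpect c S ≤ prodExpect (fun i => uniformOn (U i)) S from
    key univ X (fun i _ => ⟨hX i, hXq i⟩) (fun i hi => absurd (mem_univ i) hi)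
  intro s
  induction s using Finset.induction_on with
  | empty =>
    intro c _ huniform
    choose U hUq hU using fun i => huniform i (notMem_empty i)
    exact ⟨U, hUq, le_of_eq (by rw [← funext hU])⟩
  | insert j s hj ih =>
    intro c hbdd huniform
    obtain ⟨hcj, hcjq⟩ := hbdd j (mem_insert_self j s)
    obtain ⟨T, hT, hle⟩ := exists_prodExpect_le_update_uniformOn hq hqα c S j hcj hcjq
    obtain ⟨U, hU, hle'⟩ := ih (Function.update c j (uniformOn T))
      (fun i hi => by
        rw [Function.update_of_ne (ne_of_mem_of_not_mem hi hj)]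
        exact hbdd i (mem_insert_of_mem hi))
      (fun i hi => by
        by_cases hij : i = j
        · subst hij; exact ⟨T, hT, Function.update_self ..⟩
        · rw [Function.update_of_ne hij]; exact huniform i (by simp [hij, hi]))
    exact ⟨U, hU, hle.trans hle'⟩

lemma prodExpect_uniformOn (U : ι → Finset α) (S : (ι → α) → ℝ) :
    prodExpect (fun i => uniformOn (U i)) S
      = (∏ i, (#(U i) : ℝ))⁻¹ * ∑ x ∈ Fintype.piFinset U, S x := by
  simp only [prodExpect, uniformOn_eq, prod_mul_distrib, prod_boole, prod_inv_distrib,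
    mem_univ, true_implies, ← Fintype.mem_piFinset, mul_assoc, ← mul_sum, ite_mul, one_mul,
    zero_mul, sum_ite_mem, univ_inter]

end ProductExpectation

section Marginal

lemma card_filter_lt_mul_le {β : Type*} [Fintype β] {μ : β → ℝ} (hμ : IsDist μ) (τ : ℝ) :
    #{v | τ < μ v} * τ ≤ 1 := by
  calc #{v | τ < μ v} * τ ≤ ∑ v ∈ {v | τ < μ v}, μ v := by
        simpa using card_nsmul_le_sum _ μ τ fun v hv => (mem_filter.1 hv).2.le
    _ ≤ ∑ v, μ v := sum_le_univ_sum_of_nonneg hμ.1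
    _ = 1 := hμ.2

variable {ι α : Type*} [Fintype ι] [DecidableEq ι] [Fintype α]

lemma isDist_prod {X : ι → α → ℝ} (hX : ∀ i, IsDist (X i)) :
    IsDist (fun x : ι → α => ∏ i, X i (x i)) :=
  ⟨fun x => prod_nonneg fun i _ => (hX i).1 _, by simp [← Fintype.prod_sum, (hX _).2]⟩

variable [DecidableEq α]

def marginal (Z : (ι → α) → ℝ) (i : ι) (v : α) : ℝ := ∑ y, if y i = v then Z y else 0

lemma sum_marginal (Z : (ι → α) → ℝ) (i : ι) : ∑ v, marginal Z i v = ∑ y, Z y := by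
  simp only [marginal]
  rw [sum_comm]
  simp

lemma marginal_nonneg {Z : (ι → α) → ℝ} (hZ : ∀ y, 0 ≤ Z y) (i : ι) (v : α) :
    0 ≤ marginal Z i v :=
  sum_nonneg fun y _ => by split_ifs; exacts [hZ y, le_rfl]

lemma marginal_mono {Z Z' : (ι → α) → ℝ} (h : ∀ y, Z y ≤ Z' y) (i : ι) (v : α) :
    marginal Z i v ≤ marginal Z' i v :=
  sum_le_sum fun y _ => by split_ifs; exacts [h y, le_rfl]

lemma marginal_le_div_of_eq_mul {P C : (ι → α) → ℝ} {γ τ θ : ℝ} (hC : ∀ y, 0 ≤ C y)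
    (hθ : 0 < θ) (hθγ : θ ≤ γ) (hPC : ∀ y, P y = γ * C y) {i : ι} {v : α}
    (hP : marginal P i v ≤ τ) : marginal C i v ≤ τ / θ := by
  have hscale : marginal P i v = γ * marginal C i v := by
    simp only [marginal, mul_sum, mul_ite, mul_zero, hPC]
  rw [le_div_iff₀ hθ]
  calc marginal C i v * θ ≤ marginal C i v * γ := by gcongr; exact marginal_nonneg hC i v
    _ ≤ τ := by linarith

lemma IsDist.marginal {Z : (ι → α) → ℝ} (hZ : IsDist Z) (i : ι) : IsDist (marginal Z i) :=
  ⟨marginal_nonneg hZ.1 i, (sum_marginal Z i).trans hZ.2⟩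

end Marginal

lemma exists_isDist_mul_eq {β : Type*} [Fintype β] [Nonempty β] {P : β → ℝ}
    (hP : ∀ y, 0 ≤ P y) : ∃ C : β → ℝ, IsDist C ∧ ∀ y, P y = (∑ y, P y) * C y := by
  by_cases h0 : ∑ y, P y = 0
  · have hP0 := (sum_eq_zero_iff_of_nonneg fun y _ => hP y).1 h0
    exact ⟨fun _ => (Fintype.card β : ℝ)⁻¹, ⟨fun _ => by positivity, by simp⟩,
      fun y => by simp [h0, hP0 y (mem_univ y)]⟩
  · exact ⟨fun y => P y / ∑ y, P y,
      ⟨fun y => div_nonneg (hP y) (sum_nonneg fun y _ => hP y), by rw [← sum_div, div_self h0]⟩,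
      fun y => by field_simp⟩

section Decomposition

variable {ι α : Type*} [Fintype ι] [LinearOrder ι] [Fintype α] [DecidableEq α]

def exitAt (H : ι → Finset α) (i : ι) : Finset (ι → α) :=
  {y | y i ∉ H i ∧ ∀ j < i, y j ∈ H j}

lemma exists_forall_mem_exitAt_iff {H : ι → Finset α} {y : ι → α}
    (hy : y ∉ Fintype.piFinset H) : ∃ i₀, ∀ i, y ∈ exitAt H i ↔ i = i₀ := by
  set s : Finset ι := {i | y i ∉ H i}
  have hs : s.Nonempty := by
    obtain ⟨i, hi⟩ := not_forall.1 (fun h => hy (Fintype.mem_piFinset.2 h))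
    exact ⟨i, by simpa [s] using hi⟩
  refine ⟨s.min' hs, fun i => ⟨fun hi => ?_, ?_⟩⟩
  · simp only [exitAt, mem_filter, mem_univ, true_and] at hi
    refine le_antisymm ?_ (s.min'_le i (by simp [s, hi.1]))
    by_contra! hlt
    exact (mem_filter.1 (s.min'_mem hs)).2 (hi.2 _ hlt)
  · rintro rfl
    simp only [exitAt, mem_filter, mem_univ, true_and]
    refine ⟨(mem_filter.1 (s.min'_mem hs)).2, fun j hj => ?_⟩
    by_contra hjH
    exact (s.min'_le j (by simp [s, hjH])).not_gt hj

lemma ite_add_sum_exitAt (H : ι → Finset α) (Z : (ι → α) → ℝ) (y : ι → α) :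
    ((if y ∈ Fintype.piFinset H then Z y else 0) + ∑ i, if y ∈ exitAt H i then Z y else 0)
      = Z y := by
  by_cases hy : y ∈ Fintype.piFinset H
  · rw [Fintype.mem_piFinset] at hy
    simp [exitAt, hy]
  · obtain ⟨i₀, hi₀⟩ := exists_forall_mem_exitAt_iff hy
    simp [hy, hi₀]

lemma sum_piFinset_add_sum_sum_exitAt (H : ι → Finset α) (Z : (ι → α) → ℝ) :
    ∑ y ∈ Fintype.piFinset H, Z y + ∑ i, ∑ y ∈ exitAt H i, Z y = ∑ y, Z y := by
  calc _ = ∑ y, ((if y ∈ Fintype.piFinset H then Z y else 0) +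
        ∑ i, if y ∈ exitAt H i then Z y else 0) := by
        rw [sum_add_distrib, sum_comm (f := fun y i => if y ∈ exitAt H i then Z y else 0)]
        simp only [sum_ite_mem, univ_inter]
    _ = ∑ y, Z y := by simp only [ite_add_sum_exitAt]

lemma marginal_ite_mem_exitAt_le {H : ι → Finset α} {Z : (ι → α) → ℝ} (hZ : ∀ y, 0 ≤ Z y)
    {τ : ℝ} (hτ : 0 ≤ τ) (hlight : ∀ i, ∀ v ∉ H i, marginal Z i v ≤ τ) (i : ι) (v : α) :
    marginal (fun y => if y ∈ exitAt H i then Z y else 0) i v ≤ τ := by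
  by_cases hv : v ∈ H i
  · refine (sum_nonpos fun y _ => ?_).trans hτ
    dsimp only
    split_ifs with hyv hy
    · exact absurd (hyv ▸ hv) (mem_filter.1 hy).2.1
    all_goals exact le_rfl
  · exact (marginal_mono (fun y => by split_ifs; exacts [le_rfl, hZ y]) i v).trans
      (hlight i v hv)

/-- `Cᵢ` is `Z` conditioned on `exitAt H i` when that event has mass at least `θ`; `R` collects
the heavy box `∏ Hᵢ` and the lighter events. -/
lemma exists_somewhere_decomposition {Z : (ι → α) → ℝ} (hZ : IsDist Z) (H : ι → Finset α)
    {τ θ δ : ℝ} (hτ : 0 ≤ τ) (hθ : 0 < θ) (hlight : ∀ i, ∀ v ∉ H i, marginal Z i v ≤ τ)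
    (hheavy : ∑ y ∈ Fintype.piFinset H, Z y ≤ δ) :
    ∃ (γ : ι → ℝ) (γR : ℝ) (C : ι → (ι → α) → ℝ) (R : (ι → α) → ℝ),
      (∀ i, 0 ≤ γ i) ∧ 0 ≤ γR ∧ (∑ i, γ i) + γR = 1 ∧ γR ≤ Fintype.card ι * θ + δ ∧
      (∀ i, IsDist (C i)) ∧ IsDist R ∧
      (∀ y, Z y = (∑ i, γ i * C i y) + γR * R y) ∧
      (∀ i, 0 < γ i → ∀ v, marginal (C i) i v ≤ τ / θ) := by
  have : Nonempty (ι → α) := by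
    obtain ⟨y, -, -⟩ := exists_ne_zero_of_sum_ne_zero (hZ.2 ▸ one_ne_zero)
    exact ⟨y⟩
  set m : ι → ℝ := fun i => ∑ y ∈ exitAt H i, Z y
  set P : ι → (ι → α) → ℝ := fun i y => if θ ≤ m i ∧ y ∈ exitAt H i then Z y else 0
  have hP0 : ∀ i y, 0 ≤ P i y := fun i y => by
    simp only [P]; split_ifs; exacts [hZ.1 y, le_rfl]
  have hPle : ∀ i y, P i y ≤ if y ∈ exitAt H i then Z y else 0 := fun i y => by
    simp only [P]; split_ifs <;> simp_all [hZ.1 y]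
  have hPmass : ∀ i, ∑ y, P i y = if θ ≤ m i then m i else 0 := fun i => by
    simp only [P, ite_and, m]
    split_ifs <;> simp [sum_ite_mem]
  set Q : (ι → α) → ℝ := fun y => Z y - ∑ i, P i y
  have hQ0 : ∀ y, 0 ≤ Q y := fun y => by
    have := ite_add_sum_exitAt H Z y
    have := sum_le_sum fun i (_ : i ∈ univ) => hPle i y
    split_ifs at * <;> linarith [hZ.1 y]
  have htotal : ∑ y ∈ Fintype.piFinset H, Z y + ∑ i, m i = 1 :=
    (sum_piFinset_add_sum_sum_exitAt H Z).trans hZ.2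
  have hQmass : ∑ y, Q y ≤ Fintype.card ι * θ + δ := by
    have hsmall : ∀ i, m i - ∑ y, P i y ≤ θ := fun i => by
      rw [hPmass]; split_ifs with h <;> linarith
    calc ∑ y, Q y = ∑ y ∈ Fintype.piFinset H, Z y + ∑ i, (m i - ∑ y, P i y) := by
          simp only [Q, sum_sub_distrib, hZ.2, ← htotal]; rw [sum_comm (f := P)]; ring
      _ ≤ δ + ∑ _i : ι, θ := add_le_add hheavy (sum_le_sum fun i _ => hsmall i)
      _ = Fintype.card ι * θ + δ := by simp [add_comm]
  choose C hC hPC using fun i => exists_isDist_mul_eq (hP0 i)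
  obtain ⟨R, hR, hQR⟩ := exists_isDist_mul_eq hQ0
  refine ⟨fun i => ∑ y, P i y, ∑ y, Q y, C, R, fun i => sum_nonneg fun y _ => hP0 i y,
    sum_nonneg fun y _ => hQ0 y, ?_, hQmass, hC, hR, fun y => ?_, fun i hγ v => ?_⟩
  · simp only [Q, sum_sub_distrib, hZ.2]; rw [sum_comm (f := P)]; ring
  · rw [← hQR, ← sum_congr rfl fun i _ => hPC i y]; ring
  · have hgood : θ ≤ m i := by
      by_contra h; simp only [hPmass, if_neg h] at hγ; exact lt_irrefl 0 hγ
    refine marginal_le_div_of_eq_mul (hC i).1 hθ ?_ (hPC i)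
      ((marginal_mono (hPle i) i v).trans (marginal_ite_mem_exitAt_le hZ.1 hτ hlight i v))
    rwa [hPmass, if_pos hgood]

end Decomposition

section Boxes

variable {n w : ℕ}

lemma sum_pushforward_mul (f : Space n w → Space n w) (p S : Space n w → ℝ) :
    ∑ y, pushforward f p y * S y = ∑ x, p x * S (f x) := by
  simp only [pushforward, sum_mul, ite_mul, zero_mul]
  rw [sum_comm]
  simp

lemma IsDist.pushforward {p : Space n w → ℝ} (hp : IsDist p) (f : Space n w → Space n w) :
    IsDist (pushforward f p) := by
  refine ⟨fun y => sum_nonneg fun x _ => by split_ifs; exacts [hp.1 x, le_rfl], ?_⟩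
  simpa [hp.2] using sum_pushforward_mul f p 1

lemma exists_cover_card_mul_le {β : Type*} [Fintype β] [DecidableEq β] {q : ℕ} (hq : 0 < q)
    (hqβ : q ≤ Fintype.card β) (H : Finset β) :
    ∃ 𝒱 : Finset (Finset β), (∀ V ∈ 𝒱, #V = q) ∧ (∀ v ∈ H, ∃ V ∈ 𝒱, v ∈ V) ∧
      #𝒱 * q ≤ #H + q := by
  induction H using Finset.strongInduction with
  | H H ih =>
  by_cases hc : #H ≤ q
  · obtain ⟨V, hHV, hV⟩ := exists_superset_card_eq hc hqβ
    exact ⟨{V}, by simp [hV], fun v hv => ⟨V, mem_singleton_self V, hHV hv⟩, by simp⟩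
  · obtain ⟨T, hTH, hT⟩ := exists_subset_card_eq (not_le.1 hc).le
    obtain ⟨𝒱, h𝒱, hcov, hcard⟩ := ih (H \ T) (sdiff_ssubset hTH (card_pos.1 (hT ▸ hq)))
    refine ⟨insert T 𝒱, by simpa [hT] using h𝒱, fun v hv => ?_, ?_⟩
    · by_cases hvT : v ∈ T
      · exact ⟨T, mem_insert_self T 𝒱, hvT⟩
      · obtain ⟨V, hV, hvV⟩ := hcov v (mem_sdiff.2 ⟨hv, hvT⟩)
        exact ⟨V, mem_insert_of_mem hV, hvV⟩
    · rw [card_sdiff_of_subset hTH, hT] at hcard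
      have := Nat.mul_le_mul_right q (card_insert_le T 𝒱)
      rw [add_one_mul] at this
      omega

lemma card_filter_mem_piFinset_le {q : ℕ} (f : Space n w → Space n w)
    (Us : Fin w → Finset (Str n)) {M : ℝ}
    (hM : ∀ Vs, IsBox n w q Vs → (boxCount f Us Vs : ℝ) ≤ M) (H : Fin w → Finset (Str n))
    (𝒱 : Fin w → Finset (Finset (Str n))) (h𝒱 : ∀ i, ∀ V ∈ 𝒱 i, #V = q)
    (hcov : ∀ i, ∀ v ∈ H i, ∃ V ∈ 𝒱 i, v ∈ V) :
    (#{x ∈ Fintype.piFinset Us | f x ∈ Fintype.piFinset H} : ℝ) ≤ (∏ i, (#(𝒱 i) : ℝ)) * M := by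
  have hsub : {x ∈ Fintype.piFinset Us | f x ∈ Fintype.piFinset H}
      ⊆ (Fintype.piFinset 𝒱).biUnion
          fun Vs => {x ∈ Fintype.piFinset Us | f x ∈ Fintype.piFinset Vs} := by
    intro x hx
    rw [mem_filter] at hx
    choose Vs hVs hxVs using fun i => hcov i _ (Fintype.mem_piFinset.1 hx.2 i)
    exact mem_biUnion.2 ⟨Vs, Fintype.mem_piFinset.2 hVs,
      mem_filter.2 ⟨hx.1, Fintype.mem_piFinset.2 hxVs⟩⟩
  calc (#{x ∈ Fintype.piFinset Us | f x ∈ Fintype.piFinset H} : ℝ)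
      ≤ ∑ Vs ∈ Fintype.piFinset 𝒱, (boxCount f Us Vs : ℝ) := by
        exact_mod_cast (card_le_card hsub).trans card_biUnion_le
    _ ≤ ∑ _Vs ∈ Fintype.piFinset 𝒱, M :=
        sum_le_sum fun Vs hVs => hM Vs fun i => h𝒱 i _ (Fintype.mem_piFinset.1 hVs i)
    _ = (∏ i, (#(𝒱 i) : ℝ)) * M := by simp [Fintype.card_piFinset]

lemma sum_pushforward_piFinset_le {q : ℕ} (hq : 0 < q) (hqn : q ≤ 2 ^ n)
    (f : Space n w → Space n w) {X : Fin w → Str n → ℝ} (hX : ∀ i, IsDist (X i))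
    (hXq : ∀ i v, X i v ≤ (q : ℝ)⁻¹) {M : ℝ} (hM0 : 0 ≤ M)
    (hM : ∀ Us Vs, IsBox n w q Us → IsBox n w q Vs → (boxCount f Us Vs : ℝ) ≤ M)
    (H : Fin w → Finset (Str n)) {k : ℝ} (hH : ∀ i, (#(H i) : ℝ) ≤ k * q) :
    ∑ y ∈ Fintype.piFinset H, pushforward f (fun x => ∏ i, X i (x i)) y
      ≤ ((k + 1) / q) ^ w * M := by
  have hqα : q ≤ Fintype.card (Str n) := by simpa using hqn
  have hq' : (0 : ℝ) < q := by exact_mod_cast hq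
  obtain ⟨Us, hUs, hle⟩ := exists_prodExpect_le_uniformOn hq hqα hX hXq
    fun x => if f x ∈ Fintype.piFinset H then 1 else 0
  choose 𝒱 h𝒱 hcov h𝒱card using fun i => exists_cover_card_mul_le hq hqα (H i)
  have h𝒱k : ∀ i, (#(𝒱 i) : ℝ) ≤ k + 1 := fun i => by
    have : (#(𝒱 i) : ℝ) * q ≤ #(H i) + q := by exact_mod_cast h𝒱card i
    rw [← mul_le_mul_iff_left₀ hq']
    linarith [hH i]
  calc ∑ y ∈ Fintype.piFinset H, pushforward f (fun x => ∏ i, X i (x i)) y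
      = prodExpect X fun x => if f x ∈ Fintype.piFinset H then 1 else 0 := by
        rw [prodExpect, ← sum_pushforward_mul f _ fun y => if y ∈ Fintype.piFinset H then 1 else 0]
        simp only [mul_ite, mul_one, mul_zero, sum_ite_mem, univ_inter]
    _ ≤ (q ^ w : ℝ)⁻¹ * #{x ∈ Fintype.piFinset Us | f x ∈ Fintype.piFinset H} := by
        simpa [prodExpect_uniformOn, hUs, sum_boole] using hle
    _ ≤ (q ^ w : ℝ)⁻¹ * ((∏ i, (#(𝒱 i) : ℝ)) * M) := by
        gcongr
        exact card_filter_mem_piFinset_le f Us (hM Us · hUs) H 𝒱 h𝒱 hcov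
    _ ≤ (q ^ w : ℝ)⁻¹ * ((k + 1) ^ w * M) := by
        gcongr
        exact (prod_le_prod (s := univ) (fun i _ => Nat.cast_nonneg _) fun i _ => h𝒱k i).trans_eq
          (by simp)
    _ = ((k + 1) / q) ^ w * M := by rw [div_pow]; ring

end Boxes

lemma add_one_div_two_rpow_pow_mul_le {a ε₁ ε₂ ε₃ : ℝ} (ha : 0 < a) (hε : 0 ≤ ε₁ + ε₂) (w : ℕ) :
    ((2 ^ ((ε₁ + ε₂) * a) + 1) / 2 ^ a) ^ w * (2 : ℝ) ^ (a * w * (1 - ε₁ - ε₂ - ε₃ - 1 / a))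
      ≤ 2 ^ (-(a * w * ε₃)) := by
  have hk : (1 : ℝ) ≤ 2 ^ ((ε₁ + ε₂) * a) := Real.one_le_rpow one_le_two (by positivity)
  calc _ ≤ ((2 : ℝ) ^ (1 + (ε₁ + ε₂) * a - a)) ^ w * 2 ^ (a * w * (1 - ε₁ - ε₂ - ε₃ - 1 / a)) := by
        rw [Real.rpow_sub two_pos, Real.rpow_add two_pos, Real.rpow_one]
        gcongr
        linarith
    _ = 2 ^ (-(a * w * ε₃)) := by
        rw [← Real.rpow_mul_natCast two_pos.le, ← Real.rpow_add two_pos]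
        congr 1
        field_simp
        ring

lemma sum_pushforward_piFinset_le_two_rpow {n w : ℕ} {a ε₁ ε₂ ε₃ : ℝ} (ha : 0 ≤ a)
    (hε : 0 ≤ ε₁ + ε₂) {q : ℕ} (hq : (2 : ℝ) ^ a = q) (hqn : q ≤ 2 ^ n)
    (f : Space n w → Space n w) {X : Fin w → Str n → ℝ} (hX : ∀ i, IsDist (X i))
    (hXq : ∀ i v, X i v ≤ (q : ℝ)⁻¹)
    (hcond : ∀ Us Vs, IsBox n w q Us → IsBox n w q Vs →
      (boxCount f Us Vs : ℝ) < (2 : ℝ) ^ (a * w * (1 - ε₁ - ε₂ - ε₃ - 1 / a)))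
    (H : Fin w → Finset (Str n)) (hH : ∀ i, (#(H i) : ℝ) ≤ 2 ^ ((ε₁ + ε₂) * a) * q) :
    ∑ y ∈ Fintype.piFinset H, pushforward f (fun x => ∏ i, X i (x i)) y
      ≤ 2 ^ (-(a * w * ε₃)) := by
  rcases ha.eq_or_lt with rfl | hpos
  · calc _ ≤ ∑ y, pushforward f (fun x => ∏ i, X i (x i)) y :=
          sum_le_univ_sum_of_nonneg ((isDist_prod hX).pushforward f).1
      _ = 2 ^ (-(0 * w * ε₃)) := by simp [((isDist_prod hX).pushforward f).2]
  · have hq0 : 0 < q := by exact_mod_cast hq ▸ Real.rpow_pos_of_pos two_pos a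
    refine (sum_pushforward_piFinset_le hq0 hqn f hX hXq (by positivity)
      (fun Us Vs hUs hVs => (hcond Us Vs hUs hVs).le) H hH).trans ?_
    rw [← hq]
    exact add_one_div_two_rpow_pow_mul_le hpos hε w

theorem stmt1_general (n w : ℕ) (π : Equiv.Perm (Space n w)) (α ε₁ ε₂ ε₃ : ℝ)
    (hα0 : 0 < α) (hα1 : α < 1) (hε₁ : 0 < ε₁) (hε₂ : 0 < ε₂)
    (q : ℕ) (hq : (2 : ℝ) ^ (α * n) = q)
    (hcond : ∀ Us Vs : Fin w → Finset (Str n), IsBox n w q Us → IsBox n w q Vs →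
      (boxCount (⇑π) Us Vs : ℝ)
        < (2 : ℝ) ^ (α * n * w * (1 - ε₁ - ε₂ - ε₃ - 1 / (α * n)))) :
    IsMSSC n w (⇑π) α ε₁
      ((w : ℝ) * (2 : ℝ) ^ (-(α * n * ε₂)) + (2 : ℝ) ^ (-(α * n * w * ε₃))) := by
  intro X hX hXq
  have hq0 : (0 : ℝ) < q := hq ▸ Real.rpow_pos_of_pos two_pos _
  have hqn : q ≤ 2 ^ n := by
    have : (q : ℝ) ≤ 2 ^ (n : ℝ) :=
      hq ▸ Real.rpow_le_rpow_of_exponent_le one_le_two (by nlinarith)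
    exact_mod_cast (Real.rpow_natCast 2 n ▸ this)
  have hXq' : ∀ i v, X i v ≤ (q : ℝ)⁻¹ := by
    simpa [Real.rpow_neg zero_le_two, hq] using hXq
  set τ : ℝ := ((2 : ℝ) ^ ((ε₁ + ε₂) * (α * n)) * q)⁻¹
  set Z := pushforward (⇑π) fun x => ∏ i, X i (x i)
  have hZ : IsDist Z := (isDist_prod hX).pushforward _
  set H : Fin w → Finset (Str n) := fun i => {v | τ < marginal Z i v}
  have hH : ∀ i, (#(H i) : ℝ) ≤ 2 ^ ((ε₁ + ε₂) * (α * n)) * q := fun i => by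
    have := card_filter_lt_mul_le (hZ.marginal i) τ
    rwa [← le_div_iff₀ (by positivity), one_div, inv_inv] at this
  obtain ⟨γ, γR, C, R, hγ, hγR, hsum, hγR_le, hC, hR, hZeq, hCmarg⟩ :=
    exists_somewhere_decomposition hZ H (τ := τ) (by positivity)
      (Real.rpow_pos_of_pos two_pos (-(α * n * ε₂)))
      (fun i v hv => not_lt.1 fun h => hv (by simp [H, h]))
      (sum_pushforward_piFinset_le_two_rpow (by positivity) (by positivity) hq hqn _ hX hXq'
        hcond H hH)
  refine ⟨γ, γR, C, R, hγ, hγR, hsum, by simpa using hγR_le, hC, hR, hZeq,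
    fun i hi v => (hCmarg i hi v).trans_eq ?_⟩
  simp only [τ]
  rw [← hq, ← Real.rpow_add two_pos, ← Real.rpow_neg zero_le_two, ← Real.rpow_sub two_pos]
  congr 1
  ring

/-- **Converse theorem.** If the conductance degree of `π` satisfies
`condd_α(π) < w(1 − ε₁ − ε₂ − ε₃ − 1/(αn))`, i.e. every pair of discrete `q`-boxes `U, V`
(with `q = 2^{αn}`) satisfies `|{x ∈ U : π(x) ∈ V}| < 2^{αnw(1 − ε₁ − ε₂ − ε₃ − 1/(αn))}`,
then `π` is an `(α, ε₁, r)`-Multi-Source-Somewhere-Condenser with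
`r = w·2^{−αnε₂} + 2^{−αnwε₃}`. -/
theorem stmt1 (n w : ℕ) (π : Equiv.Perm (Space n w)) (α ε₁ ε₂ ε₃ : ℝ)
    (hα0 : 0 < α) (hα1 : α < 1) (hε₁ : 0 < ε₁) (hε₂ : 0 < ε₂) (hε₃ : 0 < ε₃)
    (q : ℕ) (hq : (2 : ℝ) ^ (α * n) = q)
    (hcond : ∀ Us Vs : Fin w → Finset (Str n), IsBox n w q Us → IsBox n w q Vs →
      (boxCount (⇑π) Us Vs : ℝ)
        < (2 : ℝ) ^ (α * n * w * (1 - ε₁ - ε₂ - ε₃ - 1 / (α * n)))) :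
    IsMSSC n w (⇑π) α ε₁
      ((w : ℝ) * (2 : ℝ) ^ (-(α * n * ε₂)) + (2 : ℝ) ^ (-(α * n * w * ε₃))) :=
  stmt1_general n w π α ε₁ ε₂ ε₃ hα0 hα1 hε₁ hε₂ q hq hcond

end Stmt1
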